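/- arXiv:2511.21545 — 3 statements merged into one kernel-verified Lean document; each statement's English description precedes it below -/
import Mathlib

section
/- Let a ∈ ℝ and let g : I → (0,∞) solve g'' + 2((g+1)/g²) g'² + 2(g+1)/(g²(1+a²)) = 0. Then there is a constant C such that g'(t)² = C e^{4/g(t)}/g(t)⁴ − 1/(1+a²) for all t ∈ I. -/
/-- First integral of the conformal-soliton ODE: if `g > 0` solves
`g'' + 2((g+1)/g²)g'² + 2(g+1)/(g²(1+a²)) = 0` on an open interval, then
`g'² = C e^{4/g}/g⁴ - 1/(1+a²)` for some constant `C`. -/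
theorem first_integral_conformal (a A B : ℝ) (g : ℝ → ℝ)
    (hg : ContDiff ℝ (⊤ : ℕ∞) g)
    (hpos : ∀ t ∈ Set.Ioo A B, 0 < g t)
    (hode : ∀ t ∈ Set.Ioo A B,
      deriv (deriv g) t + 2 * ((g t + 1) / (g t) ^ 2) * (deriv g t) ^ 2
        + 2 * (g t + 1) / ((g t) ^ 2 * (1 + a ^ 2)) = 0) :
    ∃ C : ℝ, ∀ t ∈ Set.Ioo A B,
      (deriv g t) ^ 2 = C * Real.exp (4 / g t) / (g t) ^ 4 - 1 / (1 + a ^ 2) := by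
  have ha : (0:ℝ) < 1 + a ^ 2 := by positivity
  set F : ℝ → ℝ := fun t =>
    ((deriv g t) ^ 2 + 1 / (1 + a ^ 2)) * (g t) ^ 4 * Real.exp (-4 / g t) with hF
  -- F has derivative 0 on Ioo A B
  have key : ∀ t ∈ Set.Ioo A B, HasDerivAt F 0 t := by
    intro t ht
    have hb : g t ≠ 0 := (hpos t ht).ne'
    have hg1 : HasDerivAt g (deriv g t) t :=
      (hg.differentiable (by simp) t).hasDerivAt
    have hg2 : HasDerivAt (deriv g) (deriv (deriv g) t) t :=
      (((contDiff_infty_iff_deriv.mp (hg.of_le (by simp))).2).differentiable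
        (by simp) t).hasDerivAt
    have h1 : HasDerivAt (fun s => (deriv g s) ^ 2 + 1 / (1 + a ^ 2))
        (2 * deriv g t * deriv (deriv g) t) t := by
      have h := (hg2.fun_mul hg2).add_const (1 / (1 + a ^ 2))
      have e : (fun s => deriv g s * deriv g s + 1 / (1 + a ^ 2))
          = fun s => (deriv g s) ^ 2 + 1 / (1 + a ^ 2) := by ext s; ring
      rw [e] at h
      convert h using 1
      rfl
      rfl
      ring
    have h2 : HasDerivAt (fun s => (g s) ^ 4) (4 * (g t) ^ 3 * deriv g t) t := by
      simpa using hg1.fun_pow 4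
    have h3 : HasDerivAt (fun s => -4 / g s) (4 * deriv g t / (g t) ^ 2) t := by
      have h := (hg1.fun_inv hb).const_mul (-4 : ℝ)
      have e : (fun s => -4 * (g s)⁻¹) = fun s => -4 / g s := by ext s; ring
      rw [e] at h
      convert h using 1
      rfl
      rfl
      field_simp
    have h4 : HasDerivAt (fun s => Real.exp (-4 / g s))
        (Real.exp (-4 / g t) * (4 * deriv g t / (g t) ^ 2)) t := h3.exp
    have hD := (h1.fun_mul h2).fun_mul h4
    convert hD using 1
    rfl
    rfl
    have hode' := hode t ht
    have h2'' : deriv (deriv g) t =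
        -(2 * ((g t + 1) / (g t) ^ 2) * (deriv g t) ^ 2
          + 2 * (g t + 1) / ((g t) ^ 2 * (1 + a ^ 2))) := by linarith
    rw [h2'']
    field_simp
    ring
  obtain h | h := Set.eq_empty_or_nonempty (Set.Ioo A B)
  · exact ⟨0, by simp [h]⟩
  obtain ⟨t₀, ht₀⟩ := h
  refine ⟨F t₀, fun t ht => ?_⟩
  have hconst : F t = F t₀ := by
    apply (convex_Ioo A B).is_const_of_fderivWithin_eq_zero
      (fun x hx => ((key x hx).differentiableAt).differentiableWithinAt)
      (fun x hx => ?_) ht ht₀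
    rw [fderivWithin_of_isOpen isOpen_Ioo hx, (key x hx).hasFDerivAt.fderiv]
    ext; simp
  have hb : g t ≠ 0 := (hpos t ht).ne'
  have he : Real.exp (-4 / g t) ≠ 0 := Real.exp_ne_zero _
  have : ((deriv g t) ^ 2 + 1 / (1 + a ^ 2)) * (g t) ^ 4 * Real.exp (-4 / g t) = F t₀ := hconst
  have hexp : Real.exp (4 / g t) = (Real.exp (-4 / g t))⁻¹ := by
    rw [← Real.exp_neg]; ring_nf
  rw [hexp]
  field_simp at this ⊢
  linarith [this]
end

section
/- Suppose f is smooth with f'' never zero and satisfies both f'' = P/M + N₁(f'² + 1) and s f'(s) − f(s) = (1 + R(f'(s)²+1))/(M(f'(s)²+1)) on an interval, with M ≠ 0, N₁ ≠ 0. Then f' satisfies a nontrivial polynomial equation −M² (f')⁶ + (6MN₁ − 3M²)(f')⁴ + (4MN₁ + 6P − 3M²)(f')² − M² − 2MN₁ − 2P = 0, forcing f' to be locally constant, contradicting f'' ≠ 0. -/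
lemma soliton_poly_step (A B : ℝ) (g : ℝ → ℝ) (hg : ∀ s, HasDerivAt g (deriv g s) s)
    (hg' : ∀ s ∈ Set.Ioo A B, deriv g s ≠ 0)
    (p : Polynomial ℝ) (hp : ∀ s ∈ Set.Ioo A B, p.eval (g s) = 0) :
    ∀ s ∈ Set.Ioo A B, (Polynomial.derivative p).eval (g s) = 0 := by
  intro s hs
  have h1 : (fun t => p.eval (g t)) =ᶠ[nhds s] fun _ => (0 : ℝ) :=
    Filter.eventuallyEq_of_mem (isOpen_Ioo.mem_nhds hs) hp
  have h2 : HasDerivAt (fun t => p.eval (g t))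
      ((Polynomial.derivative p).eval (g s) * deriv g s) s :=
    (p.hasDerivAt (g s)).comp s (hg s)
  have h3 := h1.deriv_eq
  rw [h2.deriv, deriv_const] at h3
  exact (mul_eq_zero.mp h3).resolve_right (hg' s hs)

/-- If a smooth `f` with `f''` never zero satisfies both
`f'' = P/M + N₁(f'² + 1)` and `s f' - f = (1 + R(f'²+1))/(M(f'²+1))` on a
nondegenerate interval, with `M ≠ 0`, `N₁ ≠ 0`, then `f'` satisfies the
polynomial equation
`-M²(f')⁶ + (6MN₁-3M²)(f')⁴ + (4MN₁+6P-3M²)(f')² - M² - 2MN₁ - 2P = 0`,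
forcing `f'` constant and yielding a contradiction. -/
theorem soliton_polynomial_contradiction (P M N₁ R A B : ℝ) (hAB : A < B)
    (hM : M ≠ 0) (hN₁ : N₁ ≠ 0)
    (f : ℝ → ℝ) (hf : ContDiff ℝ (⊤ : ℕ∞) f)
    (hf'' : ∀ s ∈ Set.Ioo A B, deriv (deriv f) s ≠ 0)
    (h1 : ∀ s ∈ Set.Ioo A B, deriv (deriv f) s = P / M + N₁ * ((deriv f s) ^ 2 + 1))
    (h2 : ∀ s ∈ Set.Ioo A B,
      s * deriv f s - f s = (1 + R * ((deriv f s) ^ 2 + 1)) / (M * ((deriv f s) ^ 2 + 1))) :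
    (∀ s ∈ Set.Ioo A B,
      -M ^ 2 * (deriv f s) ^ 6 + (6 * M * N₁ - 3 * M ^ 2) * (deriv f s) ^ 4
        + (4 * M * N₁ + 6 * P - 3 * M ^ 2) * (deriv f s) ^ 2
        - M ^ 2 - 2 * M * N₁ - 2 * P = 0) ∧
    False := by
  set g := deriv f with hgdef
  have hfd : Differentiable ℝ f := hf.differentiable (by simp)
  have hgd : Differentiable ℝ g :=
    ((hf.of_le (by simp)).iterate_deriv 1).differentiable (by simp)
  have Hf : ∀ s, HasDerivAt f (g s) s := fun s => (hfd s).hasDerivAt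
  have Hg : ∀ s, HasDerivAt g (deriv g s) s := fun s => (hgd s).hasDerivAt
  have hu : ∀ s : ℝ, (g s) ^ 2 + 1 ≠ 0 := fun s => by positivity
  -- Step A : s * M * u^2 = -2 g
  have stepA : ∀ s ∈ Set.Ioo A B, s * M * ((g s) ^ 2 + 1) ^ 2 = -2 * g s := by
    intro s hs
    have heq : (fun t => (t * g t - f t) * (M * ((g t) ^ 2 + 1)))
        =ᶠ[nhds s] (fun t => 1 + R * ((g t) ^ 2 + 1)) := by
      refine Filter.eventuallyEq_of_mem (isOpen_Ioo.mem_nhds hs) (fun t ht => ?_)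
      rw [h2 t ht, div_mul_cancel₀]
      exact mul_ne_zero hM (hu t)
    have d1 : HasDerivAt (fun t => t * g t - f t)
        (1 * g s + s * deriv g s - g s) s := ((hasDerivAt_id s).mul (Hg s)).sub (Hf s)
    have d2 : HasDerivAt (fun t => M * ((g t) ^ 2 + 1))
        (M * ((2 : ℕ) * g s ^ 1 * deriv g s)) s := (((Hg s).pow 2).add_const 1).const_mul M
    have dL : HasDerivAt (fun t => (t * g t - f t) * (M * ((g t) ^ 2 + 1)))
        ((1 * g s + s * deriv g s - g s) * (M * ((g s) ^ 2 + 1))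
          + (s * g s - f s) * (M * ((2 : ℕ) * g s ^ 1 * deriv g s))) s := d1.mul d2
    have dR : HasDerivAt (fun t => 1 + R * ((g t) ^ 2 + 1))
        (R * ((2 : ℕ) * g s ^ 1 * deriv g s)) s :=
      ((((Hg s).pow 2).add_const 1).const_mul R).const_add 1
    have E1 := heq.deriv_eq
    rw [dL.deriv, dR.deriv] at E1
    rw [h2 s hs] at E1
    push_cast at E1
    have hMu : M * ((g s) ^ 2 + 1) ≠ 0 := mul_ne_zero hM (hu s)
    field_simp at E1
    have key : M * (deriv g s * (s * M * ((g s) ^ 2 + 1) ^ 2 + 2 * g s)) = 0 := by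
      linear_combination M * E1
    have key2 := (mul_eq_zero.mp key).resolve_left hM
    have := (mul_eq_zero.mp key2).resolve_left (hf'' s hs)
    linarith
  -- Step B : M u^3 = 2 g' (3 g^2 - 1)
  have stepB : ∀ s ∈ Set.Ioo A B,
      M * ((g s) ^ 2 + 1) ^ 3 = 2 * deriv g s * (3 * (g s) ^ 2 - 1) := by
    intro s hs
    have heq : (fun t => t * M * ((g t) ^ 2 + 1) ^ 2)
        =ᶠ[nhds s] (fun t => -2 * g t) :=
      Filter.eventuallyEq_of_mem (isOpen_Ioo.mem_nhds hs) stepA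
    have du : HasDerivAt (fun t => ((g t) ^ 2 + 1) ^ 2)
        ((2 : ℕ) * ((g s) ^ 2 + 1) ^ 1 * ((2 : ℕ) * g s ^ 1 * deriv g s)) s :=
      (((Hg s).pow 2).add_const 1).pow 2
    have dL : HasDerivAt (fun t => t * M * ((g t) ^ 2 + 1) ^ 2)
        (1 * M * ((g s) ^ 2 + 1) ^ 2
          + s * M * ((2 : ℕ) * ((g s) ^ 2 + 1) ^ 1 * ((2 : ℕ) * g s ^ 1 * deriv g s))) s :=
      ((hasDerivAt_id s).mul_const M).mul du
    have dR : HasDerivAt (fun t => -2 * g t) (-2 * deriv g s) s := (Hg s).const_mul (-2)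
    have E2 := heq.deriv_eq
    rw [dL.deriv, dR.deriv] at E2
    push_cast at E2
    have hA := stepA s hs
    linear_combination ((g s) ^ 2 + 1) * E2 - 4 * g s * deriv g s * hA
  -- The polynomial identity
  have poly : ∀ s ∈ Set.Ioo A B,
      -M ^ 2 * (g s) ^ 6 + (6 * M * N₁ - 3 * M ^ 2) * (g s) ^ 4
        + (4 * M * N₁ + 6 * P - 3 * M ^ 2) * (g s) ^ 2
        - M ^ 2 - 2 * M * N₁ - 2 * P = 0 := by
    intro s hs
    have hB := stepB s hs
    have h1s := h1 s hs
    have hP : M * deriv g s = P + M * N₁ * ((g s) ^ 2 + 1) := by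
      rw [h1s]; field_simp
    linear_combination (-M) * hB - 2 * (3 * (g s) ^ 2 - 1) * hP
  refine ⟨poly, ?_⟩
  -- derive contradiction by differentiating the polynomial identity 6 times
  set p : Polynomial ℝ := Polynomial.C (-M ^ 2) * Polynomial.X ^ 6
      + Polynomial.C (6 * M * N₁ - 3 * M ^ 2) * Polynomial.X ^ 4
      + Polynomial.C (4 * M * N₁ + 6 * P - 3 * M ^ 2) * Polynomial.X ^ 2
      + Polynomial.C (- M ^ 2 - 2 * M * N₁ - 2 * P) with hp
  have hg' : ∀ s ∈ Set.Ioo A B, deriv g s ≠ 0 := hf''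
  have hp0 : ∀ s ∈ Set.Ioo A B, p.eval (g s) = 0 := by
    intro s hs
    have := poly s hs
    simp only [hp, Polynomial.eval_add, Polynomial.eval_mul, Polynomial.eval_C,
      Polynomial.eval_pow, Polynomial.eval_X]
    linarith
  have h6 := soliton_poly_step A B g Hg hg' _ (soliton_poly_step A B g Hg hg' _
    (soliton_poly_step A B g Hg hg' _ (soliton_poly_step A B g Hg hg' _
    (soliton_poly_step A B g Hg hg' _ (soliton_poly_step A B g Hg hg' p hp0)))))
  have hmid : (A + B) / 2 ∈ Set.Ioo A B := ⟨by linarith, by linarith⟩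
  have := h6 _ hmid
  simp only [hp, Polynomial.derivative_add, Polynomial.derivative_C_mul,
    Polynomial.derivative_X_pow, Polynomial.derivative_C, Polynomial.derivative_mul] at this
  norm_num [Polynomial.eval_add, Polynomial.eval_mul] at this
  exact hM this
end

section
/- The surface X(s,t) = (s, f(s)+b, t) with t > 0 is a translation soliton in hyperbolic space, i.e. satisfies t² H = X1 N1 + X2 N2 with Euclidean mean curvature H and unit normal N, if and only if f(s) = c s − b for some c ∈ ℝ; in that case the surface lies in a totally geodesic hyperbolic plane (a Euclidean plane through the z-axis boundary). -/
/-- The surface `X(s,t) = (s, f(s)+b, t)`, `t > 0`, is a translation soliton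
in hyperbolic space — i.e. satisfies `X₃² H = X₁N₁ + X₂N₂`, which for this
surface (with `H = -f''/(2(f'²+1)^{3/2})` and `N = (f',-1,0)/√(f'²+1)`) reads
`-f''(s) t² = 2(f'(s)²+1)(s f'(s) - f(s) - b)` — if and only if
`f(s) = c s - b` for some `c`; in that case the surface lies in a totally
geodesic hyperbolic plane. -/
theorem second_kind_soliton_iff (f : ℝ → ℝ) (b : ℝ) (hf : ContDiff ℝ (⊤ : ℕ∞) f) :
    (∀ s t : ℝ, 0 < t →
        -(deriv (deriv f) s) * t ^ 2 = 2 * ((deriv f s) ^ 2 + 1) * (s * deriv f s - f s - b)) ↔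
      ∃ c : ℝ, ∀ s : ℝ, f s = c * s - b := by
  constructor
  · intro h
    have hdd : ∀ s, deriv (deriv f) s = 0 := by
      intro s
      have h1 := h s 1 one_pos
      have h2 := h s 2 two_pos
      nlinarith [h1, h2]
    have hrest : ∀ s, s * deriv f s - f s - b = 0 := by
      intro s
      have h1 := h s 1 one_pos
      rw [hdd s] at h1
      have hpos : (0:ℝ) < (deriv f s) ^ 2 + 1 := by positivity
      nlinarith [h1, hpos]
    -- deriv f is constant
    have hdf : Differentiable ℝ f := hf.differentiable (by simp)
    have hfi : ContDiff ℝ ((⊤ : ℕ∞) : WithTop ℕ∞) f := hf.of_le (by simp)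
    have hdf' : Differentiable ℝ (deriv f) :=
      (contDiff_infty_iff_deriv.mp hfi).2.differentiable (by simp)
    have hconst : ∀ s, deriv f s = deriv f 0 := by
      intro s
      exact is_const_of_deriv_eq_zero hdf' hdd s 0
    set c := deriv f 0 with hc
    refine ⟨c, fun s => ?_⟩
    -- g = f - c * id has zero derivative
    have hg : ∀ x, deriv (fun y => f y - c * y) x = 0 := by
      intro x
      rw [deriv_fun_sub (hdf x) (by fun_prop)]
      have : deriv (fun y : ℝ => c * y) x = c := by
        simpa using deriv_const_mul c (differentiableAt_fun_id (x := x))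
      simp [hconst x, this]
    have hgd : Differentiable ℝ (fun y => f y - c * y) := by fun_prop
    have hgc : f s - c * s = f 0 - c * 0 :=
      is_const_of_deriv_eq_zero hgd hg s 0
    have h0 := hrest 0
    simp at h0
    -- h0 : f 0 = -b (as 0 - f 0 - b = 0)
    have : f 0 = -b := by linarith [hrest 0, h0]
    nlinarith [hgc, this]
  · rintro ⟨c, hcf⟩ s t ht
    have hfun : f = fun s => c * s - b := funext hcf
    have h1 : deriv f = fun _ => c := by
      rw [hfun]; ext x
      rw [deriv_fun_sub (by fun_prop) (by fun_prop)]
      have : deriv (fun y : ℝ => c * y) x = c := by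
        simpa using deriv_const_mul c (differentiableAt_fun_id (x := x))
      simp [this]
    have h2 : deriv (deriv f) = fun _ => 0 := by
      rw [h1]; ext x; simp
    rw [h2, h1, hfun]
    ring
end
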